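/- arXiv:1008.0213 — 6 statements merged into one kernel-verified Lean document; each statement's English description precedes it below -/
import Mathlib

section
/- Let j ≥ 1, let U be a set of variables among x₁,…,xₙ, and let e₁,…,e_m be equations over 𝔽₂ such that the sets var(e_i) ∖ U are pairwise disjoint and each of size exactly j. Let e be an equation with var(e) ≠ ∅, |var(e) ∖ U| ≤ j, and var(e) ≠ var(e_i) for every i. Then the indicator vector of var(e) in 𝔽₂ⁿ does not lie in the 𝔽₂-linear span of the indicator vectors of var(e₁),…,var(e_m); consequently, neither e nor its negation can be expressed as a sum modulo 2 of one or more of the equations e₁,…,e_m. -/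
/-!
Suppose a subset sum of the equations `e_i`, `i ∈ T`, has the variable set of `e`. Outside `U`
the sets `var(e_i)` are disjoint, so there the sum is just their union: `var(e) ∖ U` is the
disjoint union of the `var(e_i) ∖ U`, `i ∈ T`, and has `|T| · j` elements. As `j ≥ 1` and
`|var(e) ∖ U| ≤ j`, the set `T` is empty (impossible since `var(e) ≠ ∅`) or a singleton `{i}`
(impossible since `var(e) ≠ var(e_i)`). Over `𝔽₂` every element of a span is such a subset sum.
-/

open Finset

variable {ι α R : Type*}

theorem Submodule.exists_finset_sum_eq_of_mem_span_range_zmod_two [Fintype ι] [AddCommGroup R]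
    [Module (ZMod 2) R] {v : ι → R} {x : R} (hx : x ∈ Submodule.span (ZMod 2) (Set.range v)) :
    ∃ T : Finset ι, ∑ i ∈ T, v i = x := by
  obtain ⟨c, rfl⟩ := (Submodule.mem_span_range_iff_exists_fun _).mp hx
  refine ⟨univ.filter (c · = 1), ?_⟩
  rw [sum_filter]
  refine sum_congr rfl fun i _ => ?_
  obtain h | h : c i = 0 ∨ c i = 1 := by
    generalize c i = a
    revert a
    decide
  all_goals simp [h]

section Indicators

variable [DecidableEq α] [AddCommMonoidWithOne R]

theorem ite_one_zero_eq_ite_one_zero_iff [NeZero (1 : R)] {P Q : Prop} [Decidable P]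
    [Decidable Q] : ((if P then (1 : R) else 0) = if Q then 1 else 0) ↔ (P ↔ Q) := by
  by_cases P <;> by_cases Q <;> simp_all

theorem Finset.sum_ite_mem_eq_ite_mem_biUnion {T : Finset ι} {W : ι → Finset α}
    (hW : (T : Set ι).PairwiseDisjoint W) (p : α) :
    ∑ i ∈ T, (if p ∈ W i then (1 : R) else 0) = if p ∈ T.biUnion W then 1 else 0 := by
  have := indicator_biUnion_apply T (fun i => (W i : Set α)) (f := (1 : α → R))
    (pairwiseDisjoint_coe.mpr hW) p
  classical
  simp only [Set.indicator_apply, Set.mem_iUnion₂, mem_coe, Pi.one_apply] at this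
  simpa only [mem_biUnion, exists_prop] using this.symm

variable [NeZero (1 : R)]

theorem Finset.sdiff_eq_biUnion_sdiff_of_sum_ite_mem_eq {U E : Finset α} {V : ι → Finset α}
    {T : Finset ι} (hdisj : (T : Set ι).PairwiseDisjoint fun i => V i \ U)
    (hsum : ∑ i ∈ T, (fun p => if p ∈ V i then (1 : R) else 0) =
      fun p => if p ∈ E then 1 else 0) :
    E \ U = T.biUnion fun i => V i \ U := by
  ext p
  by_cases hpU : p ∈ U
  · simp [hpU]
  have hp := congrFun hsum p
  have hV : ∀ i, p ∈ V i ↔ p ∈ V i \ U := fun i => by simp [hpU]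
  simp only [Finset.sum_apply, hV, sum_ite_mem_eq_ite_mem_biUnion hdisj,
    ite_one_zero_eq_ite_one_zero_iff] at hp
  simp [hpU, hp]

theorem Finset.card_le_one_of_sum_ite_mem_eq {U E : Finset α} {V : ι → Finset α} {T : Finset ι}
    {j : ℕ} (hj : 1 ≤ j) (hcard : ∀ i, (V i \ U).card = j)
    (hdisj : (T : Set ι).PairwiseDisjoint fun i => V i \ U) (hEcard : (E \ U).card ≤ j)
    (hsum : ∑ i ∈ T, (fun p => if p ∈ V i then (1 : R) else 0) =
      fun p => if p ∈ E then 1 else 0) :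
    T.card ≤ 1 := by
  have hEU : (E \ U).card = T.card * j := by
    rw [sdiff_eq_biUnion_sdiff_of_sum_ite_mem_eq hdisj hsum, card_biUnion hdisj]
    simp [hcard]
  exact Nat.le_of_mul_le_mul_right (by omega : T.card * j ≤ 1 * j) hj

end Indicators

/-- If the residual variable sets `V i \ U` are pairwise disjoint of size
exactly `j`, and `E` is a nonempty variable set with `|E \ U| ≤ j` distinct from every
`V i`, then the indicator vector of `E` is not in the `𝔽₂`-span of the indicator vectors
of the `V i`; consequently no nonempty subset of the equations sums (mod 2) to `E`'s
variable set, so neither the equation on `E` nor its negation is such a sum. -/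
theorem stmt_2 (n j m : ℕ) (hj : 1 ≤ j) (U : Finset (Fin n))
    (V : Fin m → Finset (Fin n))
    (hcard : ∀ i, (V i \ U).card = j)
    (hdisj : ∀ i i' : Fin m, i ≠ i' → Disjoint (V i \ U) (V i' \ U))
    (E : Finset (Fin n)) (hE : E.Nonempty) (hEcard : (E \ U).card ≤ j)
    (hEne : ∀ i, E ≠ V i) :
    ((fun p : Fin n => if p ∈ E then (1 : ZMod 2) else 0) ∉
      Submodule.span (ZMod 2)
        (Set.range fun i : Fin m => fun p : Fin n => if p ∈ V i then (1 : ZMod 2) else 0)) ∧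
    ∀ T : Finset (Fin m), T.Nonempty →
      (∑ i ∈ T, fun p : Fin n => if p ∈ V i then (1 : ZMod 2) else 0) ≠
        fun p : Fin n => if p ∈ E then (1 : ZMod 2) else 0 := by
  have hsum_empty : ∀ T : Finset (Fin m),
      (∑ i ∈ T, fun p : Fin n => if p ∈ V i then (1 : ZMod 2) else 0) =
        (fun p : Fin n => if p ∈ E then (1 : ZMod 2) else 0) → T = ∅ := by
    intro T hsum
    have hT := card_le_one_of_sum_ite_mem_eq hj hcard (fun i _ i' _ h => hdisj i i' h) hEcard hsum
    obtain rfl | hne := T.eq_empty_or_nonempty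
    · rfl
    obtain ⟨i, rfl⟩ := card_eq_one.mp (le_antisymm hT hne.card_pos)
    refine absurd ?_ (hEne i)
    ext p
    simpa only [sum_singleton, ite_one_zero_eq_ite_one_zero_iff] using (congrFun hsum p).symm
  refine ⟨fun hspan => ?_, fun T hT hsum => hT.ne_empty (hsum_empty T hsum)⟩
  obtain ⟨T, hsum⟩ := Submodule.exists_finset_sum_eq_of_mem_span_range_zmod_two hspan
  obtain ⟨p, hp⟩ := hE
  simpa [hsum_empty T hsum, hp] using congrFun hsum p
end

section
/- Let F be a weighted system of linear equations over 𝔽₂ on variables x₁,…,xₙ with positive integer weights and total weight W, and let S ⊆ F be a subsystem whose equations are simultaneously satisfiable and such that, for every equation e ∈ F ∖ S, the indicator vector of var(e) does not lie in the 𝔽₂-linear span of the indicator vectors {var(e') : e' ∈ S}. Then there exists an assignment x ∈ 𝔽₂ⁿ whose weight is at least W/2 + w(S)/2, where w(S) denotes the total weight of the equations in S. -/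
/-!
Fix `x₀` satisfying `S` and let `K` be the solution space of the homogeneous system
`a e ⬝ᵥ z = 0` (`e ∈ S`). Every point of the coset `x₀ + K` satisfies all of `S`. For `e ∉ S`, a
functional separating `a e` from the span of `a '' S` is a dot product with some `z₀ ∈ K` such that
`a e ⬝ᵥ z₀ = 1`, so translation by `z₀` swaps the points of `x₀ + K` that satisfy `e` with those that
do not: exactly half of them satisfy `e`. The average weight over `x₀ + K` is therefore
`W/2 + w(S)/2`, and some point of the coset reaches it.
-/

open Finset Matrix

theorem exists_dotProduct_ne_zero_of_notMem_span {K m : Type*} [Field K] [Fintype m]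
    [DecidableEq m] {s : Set (m → K)} {u : m → K} (hu : u ∉ Submodule.span K s) :
    ∃ z : m → K, (∀ v ∈ s, v ⬝ᵥ z = 0) ∧ u ⬝ᵥ z ≠ 0 := by
  obtain ⟨f, hfu, hf⟩ := Submodule.exists_dual_map_eq_bot_of_notMem hu inferInstance
  have hf_apply (v : m → K) : f v = v ⬝ᵥ fun i => f fun j => if i = j then 1 else 0 :=
    f.pi_apply_eq_sum_univ v
  refine ⟨_, fun v hv => ?_, by rwa [← hf_apply]⟩
  have : f v ∈ (Submodule.span K s).map f := Submodule.mem_map_of_mem (Submodule.subset_span hv)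
  rwa [hf, Submodule.mem_bot, hf_apply] at this

theorem ite_mem_dotProduct {m R : Type*} [Fintype m] [DecidableEq m] [NonAssocSemiring R]
    (s : Finset m) (x : m → R) : (fun p => if p ∈ s then 1 else 0) ⬝ᵥ x = ∑ i ∈ s, x i := by
  simp [dotProduct, ite_mul, sum_ite_mem]

section ZModTwo

variable {m ι : Type*} [Fintype m]

theorem two_mul_card_filter_dotProduct_eq {G : Finset (m → ZMod 2)} {z₀ : m → ZMod 2}
    (hG : ∀ z ∈ G, z + z₀ ∈ G) {u : m → ZMod 2} (hu : u ⬝ᵥ z₀ = 1) (c : ZMod 2) :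
    2 * #{z ∈ G | u ⬝ᵥ z = c} = #G := by
  have hflip (z : m → ZMod 2) : u ⬝ᵥ (z + z₀) = c ↔ ¬u ⬝ᵥ z = c := by
    rw [dotProduct_add, hu]
    generalize u ⬝ᵥ z = t
    revert t c
    decide
  have hinv (z : m → ZMod 2) : z + z₀ + z₀ = z := by
    rw [add_assoc, ZModModule.add_self, add_zero]
  have hcard : #{z ∈ G | u ⬝ᵥ z = c} = #{z ∈ G | ¬u ⬝ᵥ z = c} := by
    refine card_nbij' (· + z₀) (· + z₀) ?_ ?_ (fun z _ => hinv z) (fun z _ => hinv z) <;>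
      intro z hz <;> simp only [mem_coe, mem_filter] at hz ⊢
    · exact ⟨hG z hz.1, fun h => (hflip z).1 h hz.2⟩
    · exact ⟨hG z hz.1, (hflip z).2 hz.2⟩
  have hsplit := card_filter_add_card_filter_not (s := G) (fun z => u ⬝ᵥ z = c)
  omega

variable [DecidableEq m]

/-- Equation `e` reads `a e ⬝ᵥ x = b e`; in the theorem `a e` is the indicator vector of `var(e)`. -/
def satWeight {𝕜 : Type*} [AddCommMonoid 𝕜] [Fintype ι] (a : ι → m → ZMod 2) (b : ι → ZMod 2)
    (w : ι → 𝕜) (x : m → ZMod 2) : 𝕜 :=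
  ∑ e, if a e ⬝ᵥ x = b e then w e else 0

def homogeneousSolutions (a : ι → m → ZMod 2) (S : Finset ι) : Finset (m → ZMod 2) :=
  {z | ∀ e ∈ S, a e ⬝ᵥ z = 0}

variable {a : ι → m → ZMod 2} {b : ι → ZMod 2} {S : Finset ι} {x₀ : m → ZMod 2}

theorem sum_ite_dotProduct_add_of_mem {𝕜 : Type*} [Semiring 𝕜] (w : ι → 𝕜)
    (hx₀ : ∀ e ∈ S, a e ⬝ᵥ x₀ = b e) {e : ι} (he : e ∈ S) :
    ∑ z ∈ homogeneousSolutions a S, (if a e ⬝ᵥ (x₀ + z) = b e then w e else 0) =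
      #(homogeneousSolutions a S) * w e := by
  rw [← nsmul_eq_mul, ← sum_const]
  refine sum_congr rfl fun z hz => if_pos ?_
  rw [dotProduct_add, hx₀ e he, (mem_filter.1 hz).2 e he, add_zero]

theorem sum_ite_dotProduct_add_of_notMem {𝕜 : Type*} [Field 𝕜] [CharZero 𝕜] (w : ι → 𝕜)
    {e : ι} (he : ∃ z₀ ∈ homogeneousSolutions a S, a e ⬝ᵥ z₀ = 1) :
    ∑ z ∈ homogeneousSolutions a S, (if a e ⬝ᵥ (x₀ + z) = b e then w e else 0) =
      #(homogeneousSolutions a S) * (w e / 2) := by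
  obtain ⟨z₀, hz₀, hez₀⟩ := he
  have hclosed : ∀ z ∈ homogeneousSolutions a S, z + z₀ ∈ homogeneousSolutions a S := by
    simp only [homogeneousSolutions, mem_filter, mem_univ, true_and] at hz₀ ⊢
    intro z hz e' he'
    rw [dotProduct_add, hz e' he', hz₀ e' he', add_zero]
  have hcard := two_mul_card_filter_dotProduct_eq hclosed hez₀ (b e - a e ⬝ᵥ x₀)
  rw [sum_ite, sum_const_zero, add_zero, sum_const, nsmul_eq_mul]
  simp only [dotProduct_add, ← eq_sub_iff_add_eq']
  rw [← hcard, Nat.cast_mul]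
  field_simp
  norm_num

theorem sum_satWeight_add_eq {𝕜 : Type*} [Field 𝕜] [CharZero 𝕜] [Fintype ι] (w : ι → 𝕜)
    (hx₀ : ∀ e ∈ S, a e ⬝ᵥ x₀ = b e)
    (hS : ∀ e ∉ S, ∃ z₀ ∈ homogeneousSolutions a S, a e ⬝ᵥ z₀ = 1) :
    ∑ z ∈ homogeneousSolutions a S, satWeight a b w (x₀ + z) =
      #(homogeneousSolutions a S) * ((∑ e, w e) / 2 + (∑ e ∈ S, w e) / 2) := by
  classical
  have hterm (e : ι) :
      ∑ z ∈ homogeneousSolutions a S, (if a e ⬝ᵥ (x₀ + z) = b e then w e else 0) =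
        #(homogeneousSolutions a S) * (w e / 2 + if e ∈ S then w e / 2 else 0) := by
    by_cases he : e ∈ S
    · rw [sum_ite_dotProduct_add_of_mem w hx₀ he, if_pos he, add_halves]
    · rw [sum_ite_dotProduct_add_of_notMem w (hS e he), if_neg he, add_zero]
  simp only [satWeight]
  rw [sum_comm, sum_congr rfl fun e _ => hterm e, ← mul_sum, sum_add_distrib, sum_ite_mem,
    univ_inter, sum_div, sum_div]

theorem exists_satWeight_ge {𝕜 : Type*} [Field 𝕜] [LinearOrder 𝕜] [IsStrictOrderedRing 𝕜]
    [Fintype ι] (a : ι → m → ZMod 2) (b : ι → ZMod 2) (w : ι → 𝕜) (S : Finset ι)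
    (hsat : ∃ x₀, ∀ e ∈ S, a e ⬝ᵥ x₀ = b e)
    (hspan : ∀ e ∉ S, a e ∉ Submodule.span (ZMod 2) (a '' S)) :
    ∃ x, (∑ e, w e) / 2 + (∑ e ∈ S, w e) / 2 ≤ satWeight a b w x := by
  obtain ⟨x₀, hx₀⟩ := hsat
  have hS (e : ι) (he : e ∉ S) : ∃ z₀ ∈ homogeneousSolutions a S, a e ⬝ᵥ z₀ = 1 := by
    obtain ⟨z₀, hz₀S, hz₀e⟩ := exists_dotProduct_ne_zero_of_notMem_span (hspan e he)
    exact ⟨z₀, mem_filter.2 ⟨mem_univ _, fun e' he' => hz₀S _ ⟨e', he', rfl⟩⟩,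
      Fin.eq_one_of_ne_zero _ hz₀e⟩
  have hne : (homogeneousSolutions a S).Nonempty := ⟨0, by simp [homogeneousSolutions]⟩
  obtain ⟨z, -, hz⟩ := exists_le_of_sum_le hne
    (f := fun _ => (∑ e, w e) / 2 + (∑ e ∈ S, w e) / 2) (g := fun z => satWeight a b w (x₀ + z))
    (by rw [sum_satWeight_add_eq w hx₀ hS, sum_const, nsmul_eq_mul])
  exact ⟨x₀ + z, hz⟩

end ZModTwo

theorem stmt_4_general (n : ℕ) (ι : Type) [Fintype ι]
    (vars : ι → Finset (Fin n)) (rhs : ι → ZMod 2) (w : ι → ℕ)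
    (S : Finset ι)
    (hsat : ∃ x : Fin n → ZMod 2, ∀ e ∈ S, (∑ i ∈ vars e, x i) = rhs e)
    (hspan : ∀ e, e ∉ S →
      (fun p : Fin n => if p ∈ vars e then (1 : ZMod 2) else 0) ∉
        Submodule.span (ZMod 2)
          ((fun e' : ι => fun p : Fin n => if p ∈ vars e' then (1 : ZMod 2) else 0) '' ↑S)) :
    ∃ x : Fin n → ZMod 2,
      (∑ e, (w e : ℚ)) / 2 + (∑ e ∈ S, (w e : ℚ)) / 2 ≤
        ∑ e, (if (∑ i ∈ vars e, x i) = rhs e then (w e : ℚ) else 0) := by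
  have ha (e : ι) (x : Fin n → ZMod 2) :
      (fun p => if p ∈ vars e then 1 else 0) ⬝ᵥ x = ∑ i ∈ vars e, x i :=
    ite_mem_dotProduct _ _
  obtain ⟨x, hx⟩ := exists_satWeight_ge (fun e p => if p ∈ vars e then 1 else 0) rhs
    (fun e => (w e : ℚ)) S (by simpa only [ha] using hsat) hspan
  exact ⟨x, by simpa only [satWeight, ha] using hx⟩

/-- If `S` is a simultaneously satisfiable subsystem of a weighted
`𝔽₂`-linear system `F` and every equation outside `S` has its indicator vector outside
the `𝔽₂`-span of the indicator vectors of `S`, then some assignment has weight at least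
`W/2 + w(S)/2`. -/
theorem stmt_4 (n : ℕ) (ι : Type) [Fintype ι] [DecidableEq ι]
    (vars : ι → Finset (Fin n)) (rhs : ι → ZMod 2) (w : ι → ℕ)
    (hw : ∀ e, 0 < w e)
    (S : Finset ι)
    (hsat : ∃ x : Fin n → ZMod 2, ∀ e ∈ S, (∑ i ∈ vars e, x i) = rhs e)
    (hspan : ∀ e, e ∉ S →
      (fun p : Fin n => if p ∈ vars e then (1 : ZMod 2) else 0) ∉
        Submodule.span (ZMod 2)
          ((fun e' : ι => fun p : Fin n => if p ∈ vars e' then (1 : ZMod 2) else 0) '' ↑S)) :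
    ∃ x : Fin n → ZMod 2,
      (∑ e, (w e : ℚ)) / 2 + (∑ e ∈ S, (w e : ℚ)) / 2 ≤
        ∑ e, (if (∑ i ∈ vars e, x i) = rhs e then (w e : ℚ) else 0) :=
  stmt_4_general n ι vars rhs w S hsat hspan
end

section
/- Let c ≥ 1 and let F = {(f₁,S₁,w₁),…,(f_m,S_m,w_m)} be a Boolean CSP instance on variables x₁,…,xₙ ∈ {0,1}, where each Sᵢ is a tuple of at most c distinct variables, fᵢ : {0,1}^{|Sᵢ|} → {0,1}, and wᵢ is a positive integer. Let AVG denote the average over all 2ⁿ assignments of the weight ∑ᵢ wᵢ·fᵢ(x|_{Sᵢ}). Then there exists a weighted system F' of linear equations over 𝔽₂ on the same n variables, in which every equation involves at least one and at most c variables and carries a positive integer weight, with total weight W', such that for every assignment x ∈ {0,1}ⁿ the weight of x in F' equals W'/2 + 2^{c−1}·(weight of x in F − AVG). In particular, F has an assignment of weight at least AVG + k/2^c if and only if F' has an assignment of weight at least W'/2 + k/2. -/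
/-!
Expand each constraint in the Walsh basis `χ_T(z) = ∏_{p ∈ T} (-1)^{z_p}` of its own cube
`{0,1}^{s i}`. Scaled by `2^c`, the weight of `F` becomes `∑_{i,T} b_{i,T} χ_T(x|_{S_i})` with
integer coefficients `b_{i,T}`, and the terms with `T = ∅` add up to `2^c · AVG`, because a
character of a nonempty set averages to zero. Each remaining term is an `𝔽₂`-equation in
disguise: `b χ_V(x) = 2|b| · [∑_{p ∈ V} x_p = [b ≤ 0]] - |b|`, so the equations `(V, [b ≤ 0])`
with weights `|b|` give the required system.
-/

open Finset

section Walsh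

variable {ι κ R : Type*} [CommRing R]

def walsh (x : ι → Bool) (T : Finset ι) : R := ∏ p ∈ T, if x p then -1 else 1

def walshCoeff [Fintype ι] [DecidableEq ι] (g : (ι → Bool) → R) (T : Finset ι) : R :=
  ∑ y, g y * walsh y T

@[simp]
lemma walsh_empty (x : ι → Bool) : (walsh x ∅ : R) = 1 := prod_empty

@[simp, norm_cast]
lemma Int.cast_walsh (x : ι → Bool) (T : Finset ι) : ((walsh x T : ℤ) : R) = walsh x T := by
  simp [walsh, apply_ite (Int.cast : ℤ → R)]

lemma Int.cast_walshCoeff [Fintype ι] [DecidableEq ι] (g : (ι → Bool) → ℤ) (T : Finset ι) :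
    ((walshCoeff g T : ℤ) : R) = walshCoeff (fun y => (g y : R)) T := by
  simp [walshCoeff]

lemma walsh_eq_neg_one_pow (x : ι → Bool) (T : Finset ι) :
    (walsh x T : R) = (-1) ^ #{p ∈ T | x p} := by
  rw [walsh, prod_ite, prod_const_one, mul_one, prod_const]

lemma walsh_comp_of_injective [DecidableEq κ] {σ : ι → κ} (hσ : σ.Injective)
    (x : κ → Bool) (T : Finset ι) : (walsh (x ∘ σ) T : R) = walsh x (T.image σ) := by
  rw [walsh, walsh, prod_image hσ.injOn]
  rfl

lemma sum_walsh_mul_walsh [Fintype ι] (y z : ι → Bool) :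
    ∑ T, (walsh y T : R) * walsh z T = if y = z then 2 ^ Fintype.card ι else 0 := by
  have hprod (T : Finset ι) :
      (walsh y T : R) * walsh z T = ∏ p ∈ T, if y p = z p then 1 else -1 := by
    rw [walsh, walsh, ← prod_mul_distrib]
    refine prod_congr rfl fun p _ => ?_
    cases y p <;> cases z p <;> simp
  simp_rw [hprod, ← powerset_univ, ← prod_one_add]
  split_ifs with hyz
  · simp [hyz, one_add_one_eq_two]
  · obtain ⟨p, hp⟩ := Function.ne_iff.mp hyz
    exact prod_eq_zero (mem_univ p) (by simp [hp])

lemma sum_walsh_of_nonempty [Fintype ι] [DecidableEq ι] {T : Finset ι} (hT : T.Nonempty) :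
    ∑ x : ι → Bool, (walsh x T : R) = 0 := by
  have hwalsh (x : ι → Bool) :
      (walsh x T : R) = ∏ p, if p ∈ T then (if x p then -1 else 1) else 1 := by
    rw [prod_ite_mem, univ_inter, walsh]
  simp_rw [hwalsh,
    ← Fintype.prod_sum fun p (b : Bool) => if p ∈ T then (if b then -1 else 1) else (1 : R)]
  obtain ⟨p, hp⟩ := hT
  exact prod_eq_zero (mem_univ p) (by simp [hp])

@[simp]
lemma walshCoeff_empty [Fintype ι] [DecidableEq ι] (g : (ι → Bool) → R) :
    walshCoeff g ∅ = ∑ y, g y := by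
  simp [walshCoeff]

lemma sum_walshCoeff_mul_walsh [Fintype ι] [DecidableEq ι] (g : (ι → Bool) → R) (z : ι → Bool) :
    ∑ T, walshCoeff g T * walsh z T = 2 ^ Fintype.card ι * g z := by
  simp_rw [walshCoeff, sum_mul, mul_assoc, sum_comm (γ := Finset ι), ← mul_sum,
    sum_walsh_mul_walsh, mul_ite, mul_zero, sum_ite_eq', if_pos (mem_univ _), mul_comm]

lemma pow_card_mul_sum_comp_of_injective [Fintype ι] [DecidableEq ι] [Fintype κ] [DecidableEq κ]
    {σ : ι → κ} (hσ : σ.Injective) (g : (ι → Bool) → R) :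
    2 ^ Fintype.card ι * ∑ x : κ → Bool, g (x ∘ σ) = 2 ^ Fintype.card κ * ∑ y, g y := by
  simp_rw [mul_sum, ← sum_walshCoeff_mul_walsh, walsh_comp_of_injective hσ]
  rw [sum_comm, Fintype.sum_eq_single ∅]
  · simp [← sum_mul, mul_comm]
  · intro T hT
    rw [← mul_sum, sum_walsh_of_nonempty ((image_nonempty).mpr (nonempty_iff_ne_empty.mpr hT)),
      mul_zero]

end Walsh

lemma sum_nonempty_walshCoeff_mul_walsh_image {ι κ R : Type*} [Field R] [CharZero R]
    [Fintype ι] [DecidableEq ι] [Fintype κ] [DecidableEq κ] {σ : ι → κ} (hσ : σ.Injective)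
    (g : (ι → Bool) → R) (x : κ → Bool) :
    ∑ T with T.Nonempty, walshCoeff g T * walsh x (T.image σ)
      = 2 ^ Fintype.card ι * (g (x ∘ σ) - (∑ y : κ → Bool, g (y ∘ σ)) / 2 ^ Fintype.card κ) := by
  have hmean := pow_card_mul_sum_comp_of_injective hσ g
  simp_rw [nonempty_iff_ne_empty, filter_ne', sum_erase_eq_sub (mem_univ _),
    ← walsh_comp_of_injective hσ, sum_walshCoeff_mul_walsh, walshCoeff_empty, walsh_empty, mul_one]
  rw [mul_sub, ← mul_div_assoc, hmean, mul_div_cancel_left₀ _ (pow_ne_zero _ two_ne_zero)]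

section LinearSystem

variable {α J : Type*} [Fintype J]

def linSysWeight (evars : J → Finset α) (erhs : J → ZMod 2) (ew : J → ℕ) (x : α → Bool) : ℚ :=
  ∑ e, if (∑ p ∈ evars e, if x p then (1 : ZMod 2) else 0) = erhs e then (ew e : ℚ) else 0

def signBit (b : ℤ) : ZMod 2 := if 0 < b then 0 else 1

lemma ite_natCast_eq_signBit (b : ℤ) (K : ℕ) :
    (if (K : ZMod 2) = signBit b then (b.natAbs : ℚ) else 0) = b.natAbs / 2 + b / 2 * (-1) ^ K := by
  rw [Nat.cast_natAbs, Int.cast_abs, signBit]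
  rcases lt_or_ge 0 b with hb | hb
  · have hb' : (0 : ℚ) < b := by exact_mod_cast hb
    rcases Nat.even_or_odd K with hK | hK
    · simp [hb, hK.natCast_zmod_two, hK.neg_one_pow, abs_of_pos hb']
    · simp [hb, hK.natCast_zmod_two, hK.neg_one_pow, abs_of_pos hb']
  · have hb' : (b : ℚ) ≤ 0 := by exact_mod_cast hb
    rcases Nat.even_or_odd K with hK | hK
    · simp [hb.not_gt, hK.natCast_zmod_two, hK.neg_one_pow, abs_of_nonpos hb']
      ring
    · simp [hb.not_gt, hK.natCast_zmod_two, hK.neg_one_pow, abs_of_nonpos hb']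
      ring

lemma linSysWeight_signBit (V : J → Finset α) (b : J → ℤ) (x : α → Bool) :
    linSysWeight V (signBit ∘ b) (Int.natAbs ∘ b) x
      = (∑ j, ((b j).natAbs : ℚ)) / 2 + (∑ j, (b j : ℚ) * walsh x (V j)) / 2 := by
  simp only [linSysWeight, Function.comp_apply, sum_boole, ite_natCast_eq_signBit,
    walsh_eq_neg_one_pow, sum_add_distrib, sum_div]
  congr 1
  exact sum_congr rfl fun j _ => by ring

lemma linSysWeight_comp_equiv {J' : Type*} [Fintype J'] (e : J' ≃ J) (evars : J → Finset α)
    (erhs : J → ZMod 2) (ew : J → ℕ) (x : α → Bool) :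
    linSysWeight (evars ∘ e) (erhs ∘ e) (ew ∘ e) x = linSysWeight evars erhs ew x :=
  e.sum_comp fun j => if (∑ p ∈ evars j, if x p then (1 : ZMod 2) else 0) = erhs j
    then (ew j : ℚ) else 0

lemma exists_linSysWeight_eq (V : J → Finset α) (b : J → ℤ) :
    ∃ (m' : ℕ) (evars : Fin m' → Finset α) (erhs : Fin m' → ZMod 2) (ew : Fin m' → ℕ),
      (∀ e, ∃ j, b j ≠ 0 ∧ evars e = V j) ∧ (∀ e, 0 < ew e) ∧
      ∀ x, linSysWeight evars erhs ew x
        = (∑ e, (ew e : ℚ)) / 2 + (∑ j, (b j : ℚ) * walsh x (V j)) / 2 := by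
  classical
  let J' := {j // b j ≠ 0}
  let e := (Fintype.equivFin J').symm
  refine ⟨_, fun k => V (e k), fun k => signBit (b (e k)), fun k => (b (e k)).natAbs,
    fun k => ⟨e k, (e k).2, rfl⟩, fun k => Int.natAbs_pos.mpr (e k).2, fun x => ?_⟩
  have hsum : ∑ j, (b j : ℚ) * walsh x (V j) = ∑ j : J', (b j : ℚ) * walsh x (V j) := by
    rw [← sum_filter_of_ne (p := fun j => b j ≠ 0) fun j _ h => by rintro hj; simp [hj] at h]
    exact sum_subtype _ (by simp) _
  rw [hsum, e.sum_comp (fun j => ((b j).natAbs : ℚ)), ← linSysWeight_signBit,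
    ← linSysWeight_comp_equiv e]
  rfl

end LinearSystem

section CSP

variable {n m : ℕ} {s : Fin m → ℕ}

def cspWeight (scope : (i : Fin m) → Fin (s i) → Fin n)
    (f : (i : Fin m) → (Fin (s i) → Bool) → Bool) (w : Fin m → ℕ) (x : Fin n → Bool) : ℚ :=
  ∑ i, if f i (fun p => x (scope i p)) then (w i : ℚ) else 0

def cspCoeff (c : ℕ) (f : (i : Fin m) → (Fin (s i) → Bool) → Bool) (w : Fin m → ℕ)
    (j : Σ i, Finset (Fin (s i))) : ℤ :=
  if j.2.Nonempty then
    walshCoeff (fun y => if f j.1 y then 2 ^ (c - s j.1) * (w j.1 : ℤ) else 0) j.2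
  else 0

lemma sum_cspCoeff_mul_walsh {c : ℕ} {scope : (i : Fin m) → Fin (s i) → Fin n}
    {f : (i : Fin m) → (Fin (s i) → Bool) → Bool} {w : Fin m → ℕ} (hs : ∀ i, s i ≤ c)
    (hscope : ∀ i, (scope i).Injective) (x : Fin n → Bool) :
    ∑ j, (cspCoeff c f w j : ℚ) * walsh x (j.2.image (scope j.1))
      = 2 ^ c * (cspWeight scope f w x - (∑ y, cspWeight scope f w y) / 2 ^ n) := by
  have hconstraint (i : Fin m) :
      ∑ T : Finset (Fin (s i)), (cspCoeff c f w ⟨i, T⟩ : ℚ) * walsh x (T.image (scope i))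
        = 2 ^ c * ((if f i (x ∘ scope i) then (w i : ℚ) else 0)
            - (∑ y : Fin n → Bool, if f i (y ∘ scope i) then (w i : ℚ) else 0) / 2 ^ n) := by
    let g : (Fin (s i) → Bool) → ℚ := fun y => 2 ^ (c - s i) * if f i y then (w i : ℚ) else 0
    calc _ = ∑ T with T.Nonempty, walshCoeff g T * walsh x (T.image (scope i)) := by
          rw [sum_filter]
          refine sum_congr rfl fun T _ => ?_
          simp only [cspCoeff]
          split_ifs <;> simp [Int.cast_walshCoeff, g, mul_ite]
      _ = 2 ^ s i * (g (x ∘ scope i) - (∑ y : Fin n → Bool, g (y ∘ scope i)) / 2 ^ n) := by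
          simpa using sum_nonempty_walshCoeff_mul_walsh_image (hscope i) g x
      _ = _ := by
          rw [← mul_sum, mul_div_assoc, ← mul_sub, ← mul_assoc, ← pow_add,
            Nat.add_sub_cancel' (hs i)]
  rw [Fintype.sum_sigma]
  simp_rw [hconstraint]
  rw [← mul_sum, sum_sub_distrib, ← sum_div, sum_comm]
  rfl

end CSP

lemma add_div_two_pow_le_iff {c : ℕ} (hc : 1 ≤ c) (A v k W : ℚ) :
    A + k / 2 ^ c ≤ v ↔ W / 2 + k / 2 ≤ W / 2 + 2 ^ (c - 1) * (v - A) := by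
  rw [← pow_sub_one_mul (by omega : c ≠ 0), add_le_add_iff_left, ← le_sub_iff_add_le',
    div_le_iff₀ (by positivity), div_le_iff₀ two_pos]
  constructor <;> intro h <;> linarith

theorem stmt_5_general (c n m : ℕ) (hc : 1 ≤ c)
    (s : Fin m → ℕ) (hs : ∀ i, s i ≤ c)
    (scope : (i : Fin m) → Fin (s i) → Fin n)
    (hscope : ∀ i, Function.Injective (scope i))
    (f : (i : Fin m) → (Fin (s i) → Bool) → Bool)
    (w : Fin m → ℕ) :
    ∃ (m' : ℕ) (evars : Fin m' → Finset (Fin n)) (erhs : Fin m' → ZMod 2)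
      (ew : Fin m' → ℕ),
      (∀ e, 1 ≤ (evars e).card ∧ (evars e).card ≤ c) ∧
      (∀ e, 0 < ew e) ∧
      (∀ x : Fin n → Bool,
        (∑ e, if (∑ p ∈ evars e, (if x p then (1 : ZMod 2) else 0)) = erhs e
            then (ew e : ℚ) else 0) =
          (∑ e, (ew e : ℚ)) / 2 +
            2 ^ (c - 1) *
              ((∑ i, if f i (fun p => x (scope i p)) then (w i : ℚ) else 0) -
                (∑ y : Fin n → Bool,
                    ∑ i, if f i (fun p => y (scope i p)) then (w i : ℚ) else 0) / 2 ^ n)) ∧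
      (∀ k : ℚ,
        (∃ x : Fin n → Bool,
          (∑ y : Fin n → Bool,
              ∑ i, if f i (fun p => y (scope i p)) then (w i : ℚ) else 0) / 2 ^ n +
              k / 2 ^ c ≤
            ∑ i, if f i (fun p => x (scope i p)) then (w i : ℚ) else 0) ↔
        (∃ x : Fin n → Bool,
          (∑ e, (ew e : ℚ)) / 2 + k / 2 ≤
            ∑ e, if (∑ p ∈ evars e, (if x p then (1 : ZMod 2) else 0)) = erhs e
              then (ew e : ℚ) else 0)) := by
  obtain ⟨m', evars, erhs, ew, hvars, hew, hweight⟩ :=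
    exists_linSysWeight_eq (fun j : Σ i, Finset (Fin (s i)) => j.2.image (scope j.1))
      (cspCoeff c f w)
  have hweight' (x : Fin n → Bool) : linSysWeight evars erhs ew x = (∑ e, (ew e : ℚ)) / 2
      + 2 ^ (c - 1) * (cspWeight scope f w x - (∑ y, cspWeight scope f w y) / 2 ^ n) := by
    rw [hweight, sum_cspCoeff_mul_walsh hs hscope, ← pow_sub_one_mul (by omega : c ≠ 0)]
    ring
  refine ⟨m', evars, erhs, ew, fun e => ?_, hew, hweight', fun k => exists_congr fun x => ?_⟩
  · obtain ⟨⟨i, T⟩, hb, he⟩ := hvars e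
    have hT : T.Nonempty := by by_contra h; simp [cspCoeff, h] at hb
    rw [he, card_image_of_injective _ (hscope i)]
    exact ⟨hT.card_pos, (card_le_univ T).trans ((Fintype.card_fin _).trans_le (hs i))⟩
  · rw [add_div_two_pow_le_iff hc]
    exact iff_of_eq (congrArg _ (hweight' x).symm)

/-- Every weighted Boolean CSP of arity at most `c` reduces to a weighted
system of `𝔽₂`-linear equations on the same variables, with between 1 and `c` variables per
equation and positive integer weights, whose weight on every assignment `x` equals
`W'/2 + 2^{c-1}·(weight_F(x) − AVG)`; in particular `F` has an assignment of weight at least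
`AVG + k/2^c` iff `F'` has an assignment of weight at least `W'/2 + k/2`. -/
theorem stmt_5 (c n m : ℕ) (hc : 1 ≤ c)
    (s : Fin m → ℕ) (hs : ∀ i, s i ≤ c)
    (scope : (i : Fin m) → Fin (s i) → Fin n)
    (hscope : ∀ i, Function.Injective (scope i))
    (f : (i : Fin m) → (Fin (s i) → Bool) → Bool)
    (w : Fin m → ℕ) (hw : ∀ i, 0 < w i) :
    ∃ (m' : ℕ) (evars : Fin m' → Finset (Fin n)) (erhs : Fin m' → ZMod 2)
      (ew : Fin m' → ℕ),
      (∀ e, 1 ≤ (evars e).card ∧ (evars e).card ≤ c) ∧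
      (∀ e, 0 < ew e) ∧
      (∀ x : Fin n → Bool,
        (∑ e, if (∑ p ∈ evars e, (if x p then (1 : ZMod 2) else 0)) = erhs e
            then (ew e : ℚ) else 0) =
          (∑ e, (ew e : ℚ)) / 2 +
            2 ^ (c - 1) *
              ((∑ i, if f i (fun p => x (scope i p)) then (w i : ℚ) else 0) -
                (∑ y : Fin n → Bool,
                    ∑ i, if f i (fun p => y (scope i p)) then (w i : ℚ) else 0) / 2 ^ n)) ∧
      (∀ k : ℚ,
        (∃ x : Fin n → Bool,
          (∑ y : Fin n → Bool,
              ∑ i, if f i (fun p => y (scope i p)) then (w i : ℚ) else 0) / 2 ^ n +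
              k / 2 ^ c ≤
            ∑ i, if f i (fun p => x (scope i p)) then (w i : ℚ) else 0) ↔
        (∃ x : Fin n → Bool,
          (∑ e, (ew e : ℚ)) / 2 + k / 2 ≤
            ∑ e, if (∑ p ∈ evars e, (if x p then (1 : ZMod 2) else 0)) = erhs e
              then (ew e : ℚ) else 0)) :=
  stmt_5_general c n m hc s hs scope hscope f w
end

section
/- Let v₁, v₂, v₃ be three distinct elements and let C be a set of ordered triples, each of which is an enumeration of {v₁,v₂,v₃} (all three elements, each once). Suppose that for every i ∈ {1,2,3} there is a triple in C whose middle entry is vᵢ. Then there is an enumeration (a,b,c) of {v₁,v₂,v₃} such that either the three triples (a,b,c), (b,a,c), (a,c,b) all belong to C (an edge pattern), or the three triples (a,b,c), (b,c,a), (c,a,b) all belong to C (a cycle pattern). -/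
/-!
The enumerations of `{v₁, v₂, v₃}` with middle entry `u` are the two triples `(w₁, u, w₂)` and
`(w₂, u, w₁)`, so `C` picks one orientation at each of the three middles. If all three picks are
rotations of one another they form a cycle pattern; otherwise one pick `(a, b, c)` is the reverse
orientation of the other two, `(b, a, c)` and `(a, c, b)`, and they form an edge pattern.
-/

theorem triple_eq_or_eq_of_insert_eq {V : Type*} {a u c w₁ w₂ : V}
    (hs : ({a, u, c} : Set V) = {u, w₁, w₂}) (hau : a ≠ u) (hcu : c ≠ u) (hac : a ≠ c) :
    (a, u, c) = (w₁, u, w₂) ∨ (a, u, c) = (w₂, u, w₁) := by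
  have ha : a ∈ ({u, w₁, w₂} : Set V) := hs ▸ by simp
  have hc : c ∈ ({u, w₁, w₂} : Set V) := hs ▸ by simp
  simp only [Set.mem_insert_iff, Set.mem_singleton_iff] at ha hc
  simp only [Prod.mk.injEq, true_and]
  grind

theorem mem_or_mem_of_exists_mem_mid_eq {V : Type*} {C : Set (V × V × V)} {S : Set V}
    (hC : ∀ p ∈ C, ({p.1, p.2.1, p.2.2} : Set V) = S ∧
      p.1 ≠ p.2.1 ∧ p.1 ≠ p.2.2 ∧ p.2.1 ≠ p.2.2)
    {u w₁ w₂ : V} (hS : S = {u, w₁, w₂}) (hu : ∃ p ∈ C, p.2.1 = u) :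
    (w₁, u, w₂) ∈ C ∨ (w₂, u, w₁) ∈ C := by
  obtain ⟨⟨a, _, c⟩, hp, rfl⟩ := hu
  obtain ⟨hs, hau, hac, hcu⟩ := hC _ hp
  rcases triple_eq_or_eq_of_insert_eq (hs.trans hS) hau hcu.symm hac with h | h <;>
    simp only [← h, hp, true_or, or_true]

theorem stmt_10_general {V : Type} (v₁ v₂ v₃ : V)
    (C : Set (V × V × V))
    (hC : ∀ p ∈ C, ({p.1, p.2.1, p.2.2} : Set V) = {v₁, v₂, v₃} ∧
      p.1 ≠ p.2.1 ∧ p.1 ≠ p.2.2 ∧ p.2.1 ≠ p.2.2)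
    (hmid : ∀ i ∈ ({v₁, v₂, v₃} : Set V), ∃ p ∈ C, p.2.1 = i) :
    ∃ a b c : V, ({a, b, c} : Set V) = {v₁, v₂, v₃} ∧
      (((a, b, c) ∈ C ∧ (b, a, c) ∈ C ∧ (a, c, b) ∈ C) ∨
        ((a, b, c) ∈ C ∧ (b, c, a) ∈ C ∧ (c, a, b) ∈ C)) := by
  suffices h : ∃ a b c : V, ((a, b, c) ∈ C ∧ (b, a, c) ∈ C ∧ (a, c, b) ∈ C) ∨
      ((a, b, c) ∈ C ∧ (b, c, a) ∈ C ∧ (c, a, b) ∈ C) by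
    obtain ⟨a, b, c, h⟩ := h
    exact ⟨a, b, c, (hC _ (h.elim (·.1) (·.1))).1, h⟩
  have h₁ := mem_or_mem_of_exists_mem_mid_eq hC rfl (hmid v₁ (by simp))
  have h₂ := mem_or_mem_of_exists_mem_mid_eq hC (Set.insert_comm v₁ v₂ {v₃})
    (hmid v₂ (by simp))
  have h₃ := mem_or_mem_of_exists_mem_mid_eq hC (u := v₃) (w₁ := v₁) (w₂ := v₂)
    (by rw [Set.pair_comm, Set.insert_comm]) (hmid v₃ (by simp))
  rcases h₁ with h₁ | h₁ <;> rcases h₂ with h₂ | h₂ <;> rcases h₃ with h₃ | h₃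
  · exact ⟨v₁, v₂, v₃, .inl ⟨h₂, h₁, h₃⟩⟩
  · exact ⟨v₂, v₁, v₃, .inl ⟨h₁, h₂, h₃⟩⟩
  · exact ⟨v₂, v₁, v₃, .inr ⟨h₁, h₃, h₂⟩⟩
  · exact ⟨v₂, v₃, v₁, .inl ⟨h₃, h₂, h₁⟩⟩
  · exact ⟨v₁, v₃, v₂, .inl ⟨h₃, h₁, h₂⟩⟩
  · exact ⟨v₁, v₂, v₃, .inr ⟨h₂, h₃, h₁⟩⟩
  · exact ⟨v₃, v₁, v₂, .inl ⟨h₁, h₃, h₂⟩⟩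
  · exact ⟨v₃, v₂, v₁, .inl ⟨h₂, h₃, h₁⟩⟩

/-- If `C` is a set of ordered triples, each enumerating the three
distinct elements `v₁, v₂, v₃`, and for each `i` some triple of `C` has middle entry `vᵢ`,
then `C` contains an edge pattern `(a,b,c), (b,a,c), (a,c,b)` or a cycle pattern
`(a,b,c), (b,c,a), (c,a,b)` on some enumeration `(a,b,c)` of `{v₁,v₂,v₃}`. -/
theorem stmt_10 {V : Type} (v₁ v₂ v₃ : V) (h₁₂ : v₁ ≠ v₂) (h₁₃ : v₁ ≠ v₃) (h₂₃ : v₂ ≠ v₃)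
    (C : Set (V × V × V))
    (hC : ∀ p ∈ C, ({p.1, p.2.1, p.2.2} : Set V) = {v₁, v₂, v₃} ∧
      p.1 ≠ p.2.1 ∧ p.1 ≠ p.2.2 ∧ p.2.1 ≠ p.2.2)
    (hmid : ∀ i ∈ ({v₁, v₂, v₃} : Set V), ∃ p ∈ C, p.2.1 = i) :
    ∃ a b c : V, ({a, b, c} : Set V) = {v₁, v₂, v₃} ∧
      (((a, b, c) ∈ C ∧ (b, a, c) ∈ C ∧ (a, c, b) ∈ C) ∨
        ((a, b, c) ∈ C ∧ (b, c, a) ∈ C ∧ (c, a, b) ∈ C)) :=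
  stmt_10_general v₁ v₂ v₃ C hC hmid
end

section
/- Let (V,C) be an irreducible instance of 2-Linear Ordering with total weight W, and let k ≥ 1 be an integer. If no linear ordering φ of V has weight w(φ,C) ≥ W/2 + k/(2!·2⁴), then |V| < 10·k. Equivalently, if |V| ≥ 10k then some linear ordering φ satisfies w(φ,C) ≥ W/2 + k/32. -/
/-!
Take a maximal matching `M` of the constraint graph. Either the unmatched variables, each
attached to a matched neighbour, or the edges of `M` form a family of stars with at least
`|V|/3` leaves, in which every constraint inside a star joins the centre to a leaf.
Ordering the stars one way and then the other, with each leaf put before or after its centre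
as its constraint demands, satisfies every constraint between stars in exactly one of the two
orderings and every constraint inside a star in both. So one of them has weight at least
`W/2 + #leaves/2 ≥ W/2 + |V|/6`.
-/

open Finset

namespace LinearOrdering

def endpoints {V : Type*} [DecidableEq V] (e : V × V) : Finset V := {e.1, e.2}

theorem exists_maximal_matching {V : Type*} [DecidableEq V] (C : Finset (V × V)) :
    ∃ M ⊆ C, (M : Set (V × V)).PairwiseDisjoint endpoints ∧
      ∀ e ∈ C, e.1 ∈ M.biUnion endpoints ∨ e.2 ∈ M.biUnion endpoints := by
  classical
  obtain ⟨M, hM, hmax⟩ := exists_max_image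
    (C.powerset.filter fun M : Finset (V × V) => (M : Set (V × V)).PairwiseDisjoint endpoints)
    card ⟨∅, by simp⟩
  rw [mem_filter, mem_powerset] at hM
  refine ⟨M, hM.1, hM.2, fun e he => ?_⟩
  by_contra! h
  have heM : e ∉ M := fun heM => h.1 (mem_biUnion.2 ⟨e, heM, by simp [endpoints]⟩)
  have hins : ((insert e M : Finset (V × V)) : Set (V × V)).PairwiseDisjoint endpoints := by
    rw [coe_insert, Set.pairwiseDisjoint_insert]
    refine ⟨hM.2, fun e' he' _ => disjoint_left.2 fun v hv hv' => ?_⟩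
    have : v ∈ M.biUnion endpoints := mem_biUnion.2 ⟨e', he', hv'⟩
    simp only [endpoints, mem_insert, mem_singleton] at hv
    rcases hv with rfl | rfl <;> simp_all
  have := hmax (insert e M) (mem_filter.2 ⟨mem_powerset.2 (insert_subset he hM.1), hins⟩)
  rw [card_insert_of_notMem heM] at this
  omega

variable {V : Type*} [Fintype V]

def weight (C : Finset (V × V)) (w : V × V → ℕ) (φ : V ≃ Fin (Fintype.card V)) : ℚ :=
  ∑ e ∈ C.filter fun e => φ e.1 < φ e.2, (w e : ℚ)

theorem exists_equiv_fin_lt_iff {α : Type*} [LinearOrder α] (ρ : V → α)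
    (hρ : Function.Injective ρ) :
    ∃ φ : V ≃ Fin (Fintype.card V), ∀ a b, φ a < φ b ↔ ρ a < ρ b := by
  let _ : LinearOrder V := LinearOrder.lift' ρ hρ
  exact ⟨(Fintype.orderIsoFinOfCardEq V rfl).symm.toEquiv,
    fun _ _ => (Fintype.orderIsoFinOfCardEq V rfl).symm.lt_iff_lt⟩

/-- Order the clusters `r` one way and then the other, keeping the order `s` inside each
cluster: every constraint across clusters is satisfied by exactly one of the two orderings,
every constraint inside a cluster by both. -/
theorem exists_weight_ge_of_clusters {α β : Type*} [LinearOrder α] [LinearOrder β]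
    (C : Finset (V × V)) (w : V × V → ℕ) (r : V → α) (s : V → β)
    (hs : Function.Injective s) (hC : ∀ e ∈ C, r e.1 = r e.2 → s e.1 < s e.2) :
    ∃ φ : V ≃ Fin (Fintype.card V),
      (∑ e ∈ C, (w e : ℚ)) / 2 + (∑ e ∈ C with r e.1 = r e.2, (w e : ℚ)) / 2 ≤
        weight C w φ := by
  obtain ⟨φ, hφ⟩ := exists_equiv_fin_lt_iff (fun v => toLex (r v, s v))
    fun a b h => hs (congrArg (fun p => (ofLex p).2) h)
  obtain ⟨ψ, hψ⟩ := exists_equiv_fin_lt_iff (fun v => toLex (OrderDual.toDual (r v), s v))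
    fun a b h => hs (congrArg (fun p => (ofLex p).2) h)
  have hpoint : ∀ e ∈ C, (w e : ℚ) + (if r e.1 = r e.2 then (w e : ℚ) else 0) ≤
      (if φ e.1 < φ e.2 then (w e : ℚ) else 0) + (if ψ e.1 < ψ e.2 then (w e : ℚ) else 0) := by
    intro e he
    simp only [hφ, hψ, Prod.Lex.toLex_lt_toLex, OrderDual.toDual_lt_toDual,
      OrderDual.toDual_inj]
    rcases lt_trichotomy (r e.1) (r e.2) with h | h | h
    · simp [h, h.ne, h.not_gt]
    · simp [h, hC e he h]
    · simp [h, h.ne', h.not_gt]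
  have hsum : (∑ e ∈ C, (w e : ℚ)) + ∑ e ∈ C with r e.1 = r e.2, (w e : ℚ) ≤
      weight C w φ + weight C w ψ := by
    simp only [weight, sum_filter, ← sum_add_distrib]
    exact sum_le_sum hpoint
  by_cases hφC : (∑ e ∈ C, (w e : ℚ)) / 2 + (∑ e ∈ C with r e.1 = r e.2, (w e : ℚ)) / 2 ≤
      weight C w φ
  · exact ⟨φ, hφC⟩
  · exact ⟨ψ, by linarith⟩

/-- The stars are the fibres of `f`, their centres the fixed points of `f`. -/
structure IsStarPartition (C : Finset (V × V)) (f : V → V) : Prop where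
  map_map : ∀ v, f (f v) = f v
  adj_map : ∀ v, f v ≠ v → (v, f v) ∈ C ∨ (f v, v) ∈ C
  map_eq_of_map_eq : ∀ e ∈ C, f e.1 = f e.2 → f e.1 = e.1 ∨ f e.2 = e.2

variable [DecidableEq V]

namespace IsStarPartition

variable {C : Finset (V × V)} {f : V → V}

theorem card_leaves_le (hf : IsStarPartition C f) :
    #{v | f v ≠ v} ≤ #{e ∈ C | f e.1 = f e.2} := by
  let leafEdge : V → V × V := fun v => if (v, f v) ∈ C then (v, f v) else (f v, v)
  refine card_le_card_of_injOn leafEdge (fun v hv => ?_) (fun a ha b hb hab => ?_)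
  · have hv : f v ≠ v := by simpa using hv
    rcases hf.adj_map v hv with h | h <;> by_cases h' : (v, f v) ∈ C <;>
      simp_all [leafEdge, hf.map_map]
  · have ha : f a ≠ a := by simpa using ha
    have hb : f b ≠ b := by simpa using hb
    have hfa := hf.map_map a
    have hfb := hf.map_map b
    by_cases h₁ : (a, f a) ∈ C <;> by_cases h₂ : (b, f b) ∈ C <;>
      simp only [leafEdge, h₁, h₂, if_true, if_false, Prod.mk.injEq] at hab <;>
      grind

theorem exists_weight_ge (hf : IsStarPartition C f) {w : V × V → ℕ} (hw : ∀ e ∈ C, 0 < w e)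
    (hd : ∀ e ∈ C, e.1 ≠ e.2) (hrev : ∀ e ∈ C, (e.2, e.1) ∉ C) :
    ∃ φ : V ≃ Fin (Fintype.card V),
      (∑ e ∈ C, (w e : ℚ)) / 2 + (#{v | f v ≠ v} : ℚ) / 2 ≤ weight C w φ := by
  let side : V → ℤ := fun v => if f v = v then 0 else if (v, f v) ∈ C then -1 else 1
  have hside : ∀ e ∈ C, f e.1 = f e.2 → side e.1 < side e.2 := by
    intro e he h
    have hne := hd e he
    rcases hf.map_eq_of_map_eq e he h with h₁ | h₂
    · have h₂ : f e.2 ≠ e.2 := fun h₂ => hne (by rw [← h₁, h, h₂])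
      have : (e.2, f e.2) ∉ C := by rw [← h, h₁]; exact hrev e he
      simp [side, h₁, h₂, this]
    · have h₁ : f e.1 ≠ e.1 := fun h₁ => hne (by rw [← h₁, h, h₂])
      have : (e.1, f e.1) ∈ C := by rw [h, h₂]; exact he
      simp [side, h₁, h₂, this]
  obtain ⟨φ, hφ⟩ := exists_weight_ge_of_clusters C w (fun v => Fintype.equivFin V (f v))
    (fun v => toLex (side v, Fintype.equivFin V v))
    (fun a b h => (Fintype.equivFin V).injective (congrArg (fun p => (ofLex p).2) h))
    (fun e he h => Prod.Lex.toLex_lt_toLex.2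
      (Or.inl (hside e he ((Fintype.equivFin V).injective h))))
  refine ⟨φ, le_trans ?_ hφ⟩
  simp only [EmbeddingLike.apply_eq_iff_eq]
  gcongr
  calc (#{v | f v ≠ v} : ℚ) ≤ #{e ∈ C | f e.1 = f e.2} := by exact_mod_cast hf.card_leaves_le
    _ = #{e ∈ C | f e.1 = f e.2} • (1 : ℚ) := by rw [nsmul_one]
    _ ≤ ∑ e ∈ C with f e.1 = f e.2, (w e : ℚ) :=
      card_nsmul_le_sum _ _ _ fun e he => by exact_mod_cast hw e (mem_filter.1 he).1

end IsStarPartition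

theorem exists_isStarPartition_of_forall_mem_or {C : Finset (V × V)}
    (hocc : ∀ v : V, ∃ e ∈ C, e.1 = v ∨ e.2 = v) (S : Finset V)
    (hS : ∀ e ∈ C, e.1 ∈ S ∨ e.2 ∈ S) :
    ∃ f, IsStarPartition C f ∧ #Sᶜ ≤ #{v | f v ≠ v} := by
  have hnbr : ∀ v, ∃ c, v ∉ S → c ∈ S ∧ ((v, c) ∈ C ∨ (c, v) ∈ C) := by
    intro v
    obtain ⟨e, he, rfl | rfl⟩ := hocc v
    · exact ⟨e.2, fun hv => ⟨(hS e he).resolve_left hv, Or.inl he⟩⟩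
    · exact ⟨e.1, fun hv => ⟨(hS e he).resolve_right hv, Or.inr he⟩⟩
  choose g hg using hnbr
  let f v := if v ∈ S then v else g v
  have hfS : ∀ v, f v ∈ S := fun v => by
    by_cases hv : v ∈ S
    · simp [f, hv]
    · simpa [f, hv] using (hg v hv).1
  refine ⟨f, ⟨fun v => by simp [f, hfS v], fun v hv => ?_, fun e he _ => ?_⟩,
    card_le_card fun v hv => ?_⟩
  · have hvS : v ∉ S := fun hvS => hv (by simp [f, hvS])
    simpa [f, hvS] using (hg v hvS).2
  · rcases hS e he with h | h
    · exact Or.inl (by simp [f, h])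
    · exact Or.inr (by simp [f, h])
  · have hvS : v ∉ S := by simpa using hv
    simp only [mem_filter, mem_univ, true_and]
    exact fun h => hvS (h ▸ hfS v)

theorem exists_isStarPartition_of_pairwiseDisjoint {C M : Finset (V × V)}
    (hd : ∀ e ∈ C, e.1 ≠ e.2) (hMC : M ⊆ C)
    (hM : (M : Set (V × V)).PairwiseDisjoint endpoints) :
    ∃ f, IsStarPartition C f ∧ #M ≤ #{v | f v ≠ v} := by
  have hshare : ∀ a ∈ M, ∀ b ∈ M, ∀ v, v = a.1 ∨ v = a.2 → v = b.1 ∨ v = b.2 → a = b :=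
    fun a ha b hb v hva hvb =>
      hM.elim_finset ha hb v (by simpa [endpoints] using hva) (by simpa [endpoints] using hvb)
  let f v := if h : ∃ e ∈ M, e.2 = v then h.choose.1 else v
  have hf_snd : ∀ e ∈ M, f e.2 = e.1 := by
    intro e he
    have h : ∃ c ∈ M, c.2 = e.2 := ⟨e, he, rfl⟩
    have hc := h.choose_spec
    simp only [f, dif_pos h]
    rw [hshare _ hc.1 e he e.2 (Or.inr hc.2.symm) (Or.inr rfl)]
  have hf_leaf : ∀ v, f v ≠ v → ∃ e ∈ M, e.2 = v := fun v hv => by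
    by_contra h
    exact hv (dif_neg h)
  have hf_fst : ∀ e ∈ M, f e.1 = e.1 := by
    intro e he
    by_contra hne
    obtain ⟨c, hc, hce⟩ := hf_leaf _ hne
    obtain rfl := hshare c hc e he e.1 (Or.inr hce.symm) (Or.inl rfl)
    exact hd c (hMC hc) hce.symm
  refine ⟨f, ⟨fun v => ?_, fun v hv => ?_, fun e he hfe => ?_⟩, ?_⟩
  · by_cases hv : f v = v
    · rw [hv, hv]
    · obtain ⟨e, he, rfl⟩ := hf_leaf v hv
      rw [hf_snd e he, hf_fst e he]
  · obtain ⟨e, he, rfl⟩ := hf_leaf v hv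
    exact Or.inr (by rw [hf_snd e he]; exact hMC he)
  · by_contra! h
    obtain ⟨a, ha, ha1⟩ := hf_leaf _ h.1
    obtain ⟨b, hb, hb2⟩ := hf_leaf _ h.2
    rw [← ha1, ← hb2, hf_snd a ha, hf_snd b hb] at hfe
    obtain rfl := hshare a ha b hb a.1 (Or.inl rfl) (Or.inl hfe)
    exact hd e he (ha1.symm.trans hb2)
  · refine card_le_card_of_injOn Prod.snd (fun e he => ?_) (fun a ha b hb hab => ?_)
    · have := hd e (hMC he)
      simpa [hf_snd e he] using this
    · exact hshare a ha b hb a.2 (Or.inr rfl) (Or.inr hab)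

theorem exists_isStarPartition_card_le {C : Finset (V × V)} (hd : ∀ e ∈ C, e.1 ≠ e.2)
    (hocc : ∀ v : V, ∃ e ∈ C, e.1 = v ∨ e.2 = v) :
    ∃ f, IsStarPartition C f ∧ Fintype.card V ≤ 3 * #{v | f v ≠ v} := by
  obtain ⟨M, hMC, hM, hmax⟩ := exists_maximal_matching C
  have hS : #(M.biUnion endpoints) ≤ 2 * #M := card_biUnion_le.trans <| by
    simpa [mul_comm] using sum_le_card_nsmul M (fun e => #(endpoints e)) 2
      fun e _ => card_le_two
  have hV := card_add_card_compl (M.biUnion endpoints)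
  by_cases h : #M ≤ #(M.biUnion endpoints)ᶜ
  · obtain ⟨f, hf, hcard⟩ := exists_isStarPartition_of_forall_mem_or hocc _ hmax
    exact ⟨f, hf, by omega⟩
  · obtain ⟨f, hf, hcard⟩ := exists_isStarPartition_of_pairwiseDisjoint hd hMC hM
    exact ⟨f, hf, by omega⟩

end LinearOrdering

theorem stmt_16_general {V : Type} [Fintype V] [DecidableEq V] (k : ℕ)
    (C : Finset (V × V)) (w : V × V → ℕ)
    (hw : ∀ e ∈ C, 0 < w e)
    (hd : ∀ e ∈ C, e.1 ≠ e.2)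
    (hocc : ∀ v : V, ∃ e ∈ C, e.1 = v ∨ e.2 = v)
    (hrev : ∀ e ∈ C, (e.2, e.1) ∉ C)
    (hno : ¬ ∃ φ : V ≃ Fin (Fintype.card V),
      (∑ e ∈ C, (w e : ℚ)) / 2 + (k : ℚ) / 32 ≤
        ∑ e ∈ C.filter fun e => φ e.1 < φ e.2, (w e : ℚ)) :
    Fintype.card V < 10 * k := by
  by_contra! hbig
  obtain ⟨f, hf, hcard⟩ := LinearOrdering.exists_isStarPartition_card_le hd hocc
  obtain ⟨φ, hφ⟩ := hf.exists_weight_ge hw hd hrev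
  refine hno ⟨φ, le_trans ?_ hφ⟩
  have : k ≤ 16 * #{v | f v ≠ v} := by omega
  have : (k : ℚ) ≤ 16 * #{v | f v ≠ v} := by exact_mod_cast this
  linarith

/-- An irreducible instance of 2-Linear Ordering in which no linear
ordering achieves weight `W/2 + k/(2!·2⁴)` has fewer than `10k` variables. -/
theorem stmt_16 {V : Type} [Fintype V] [DecidableEq V] (k : ℕ) (hk : 1 ≤ k)
    (C : Finset (V × V)) (w : V × V → ℕ)
    (hw : ∀ e ∈ C, 0 < w e)
    (hd : ∀ e ∈ C, e.1 ≠ e.2)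
    (hocc : ∀ v : V, ∃ e ∈ C, e.1 = v ∨ e.2 = v)
    (hrev : ∀ e ∈ C, (e.2, e.1) ∉ C)
    (hno : ¬ ∃ φ : V ≃ Fin (Fintype.card V),
      (∑ e ∈ C, (w e : ℚ)) / 2 + (k : ℚ) / 32 ≤
        ∑ e ∈ C.filter fun e => φ e.1 < φ e.2, (w e : ℚ)) :
    Fintype.card V < 10 * k :=
  stmt_16_general k C w hw hd hocc hrev hno
end

section
/- Let (V,C) be an instance of 3-Linear Ordering, let B be a finite linearly ordered set of buckets, and let φ_t : V → B be any bucket map. Then there exists a linear ordering φ : V → {1,…,|V|} with w(φ,C) ≥ w_t(φ_t,C). In particular, if some bucket map φ_t satisfies w_t(φ_t,C) ≥ ρ·W + k, then some linear ordering φ satisfies w(φ,C) ≥ ρ·W + k. -/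
attribute [local instance] Classical.propDecidable

/-- Payoff of a binary ordering constraint `e` under a bucket map `φt : V → B`: zero unless
`φt e.1 ≤ φt e.2`, and otherwise `1/∏_b m_b!` where `m_b` is the bucket multiplicity. -/
noncomputable def bucketPayoff2 {V B : Type} [Fintype B] [LinearOrder B]
    (φt : V → B) (e : V × V) : ℚ :=
  if φt e.1 ≤ φt e.2 then
    (∏ b : B,
      (((if φt e.1 = b then 1 else 0) + (if φt e.2 = b then 1 else 0) : ℕ).factorial : ℚ))⁻¹
  else 0

/-- Payoff of a ternary ordering constraint `e` under a bucket map `φt : V → B`: zero unless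
`φt e.1 ≤ φt e.2.1 ≤ φt e.2.2`, and otherwise `1/∏_b m_b!`. -/
noncomputable def bucketPayoff3 {V B : Type} [Fintype B] [LinearOrder B]
    (φt : V → B) (e : V × V × V) : ℚ :=
  if φt e.1 ≤ φt e.2.1 ∧ φt e.2.1 ≤ φt e.2.2 then
    (∏ b : B,
      (((if φt e.1 = b then 1 else 0) + (if φt e.2.1 = b then 1 else 0) +
          (if φt e.2.2 = b then 1 else 0) : ℕ).factorial : ℚ))⁻¹
  else 0

/-- The weight of a linear ordering `φ` on a 3-Linear Ordering instance: total weight of the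
binary and ternary constraints it satisfies. -/
noncomputable def ordWeight {V : Type} [Fintype V]
    (C₂ : Finset (V × V)) (C₃ : Finset (V × V × V))
    (w₂ : V × V → ℕ) (w₃ : V × V × V → ℕ) (φ : V ≃ Fin (Fintype.card V)) : ℚ :=
  (∑ e ∈ C₂.filter fun e => φ e.1 < φ e.2, (w₂ e : ℚ)) +
    ∑ e ∈ C₃.filter (fun e => φ e.1 < φ e.2.1 ∧ φ e.2.1 < φ e.2.2), (w₃ e : ℚ)


/-! Refine the bucket map `φt` by an ordering `τ` of `V`: order first by bucket, and break ties
inside a bucket according to `τ`. As `τ` ranges over all orderings, the tied variables of a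
constraint appear in each of their `m_b!` relative orders equally often, so a constraint whose
buckets are non-decreasing is satisfied by exactly a `1 / ∏ m_b!` fraction of the refinements.
Hence the average weight of the refinements is the bucket weight, and some refinement attains
at least the average. -/

open Finset Function

lemma ite_sorted_sum_eq_one {W : Type} [LinearOrder W] {a b c : W}
    (hab : a ≠ b) (hac : a ≠ c) (hbc : b ≠ c) :
    ((if a < b ∧ b < c then 1 else 0) + (if a < c ∧ c < b then 1 else 0) +
      (if b < a ∧ a < c then 1 else 0) + (if b < c ∧ c < a then 1 else 0) +
      (if c < a ∧ a < b then 1 else 0) + (if c < b ∧ b < a then 1 else 0) : ℕ) = 1 := by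
  rcases hab.lt_or_gt with h₁ | h₁ <;> rcases hac.lt_or_gt with h₂ | h₂ <;>
    rcases hbc.lt_or_gt with h₃ | h₃ <;>
    simp [h₁, h₂, h₃, h₁.not_gt, h₂.not_gt, h₃.not_gt] <;> order

section Orderings
variable {V W : Type} [Fintype V] [Fintype W] [DecidableEq W]

lemma card_filter_perm_trans (π : Equiv.Perm V) (P : (V ≃ W) → Prop) [DecidablePred P] :
    #{τ | P (π.trans τ)} = #{τ | P τ} :=
  card_nbij' (π.trans ·) (π.symm.trans ·) (by simp [Set.MapsTo])
    (by simp [Set.MapsTo, ← Equiv.trans_assoc]) (by intro τ _; ext; simp) (by intro τ _; ext; simp)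

variable [LinearOrder W]

lemma card_filter_lt_mul_two {x y : V} (hxy : x ≠ y) :
    #{τ : V ≃ W | τ x < τ y} * 2 = Fintype.card (V ≃ W) := by
  have hswap : #{τ : V ≃ W | τ y < τ x} = #{τ : V ≃ W | τ x < τ y} := by
    simpa using card_filter_perm_trans (Equiv.swap x y) (fun τ : V ≃ W => τ x < τ y)
  have hcompl : (univ.filter fun τ : V ≃ W => ¬ τ x < τ y) =
      (univ.filter fun τ : V ≃ W => τ y < τ x) := by
    refine filter_congr fun τ _ => ?_
    rw [not_lt, le_iff_lt_or_eq, or_iff_left (τ.injective.ne hxy.symm)]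
  have := card_filter_add_card_filter_not (s := univ) (fun τ : V ≃ W => τ x < τ y)
  rw [hcompl, hswap, card_univ] at this
  omega

lemma card_filter_sorted_mul_six {x y z : V} (hxy : x ≠ y) (hxz : x ≠ z) (hyz : y ≠ z) :
    #{τ : V ≃ W | τ x < τ y ∧ τ y < τ z} * 6 = Fintype.card (V ≃ W) := by
  let c (a b d : V) : ℕ := #{τ : V ≃ W | τ a < τ b ∧ τ b < τ d}
  have hpart : Fintype.card (V ≃ W) =
      c x y z + c x z y + c y x z + c y z x + c z x y + c z y x := by
    rw [← card_univ, card_eq_sum_ones]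
    simp only [c, card_filter, ← sum_add_distrib]
    exact sum_congr rfl fun τ _ => (ite_sorted_sum_eq_one (τ.injective.ne hxy)
      (τ.injective.ne hxz) (τ.injective.ne hyz)).symm
  have hrel (π : Equiv.Perm V) (a b d : V) : c (π a) (π b) (π d) = c a b d :=
    card_filter_perm_trans π fun τ : V ≃ W => τ a < τ b ∧ τ b < τ d
  have h₁ : c x z y = c x y z := by
    simpa [Equiv.swap_apply_of_ne_of_ne, hxy, hxz] using hrel (Equiv.swap y z) x y z
  have h₂ : c y x z = c x y z := by
    simpa [Equiv.swap_apply_of_ne_of_ne, hxz.symm, hyz.symm] using hrel (Equiv.swap x y) x y z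
  have h₃ : c z y x = c x y z := by
    simpa [Equiv.swap_apply_of_ne_of_ne, hxy.symm, hyz] using hrel (Equiv.swap x z) x y z
  have h₄ : c y z x = c x y z := by
    simpa [Equiv.swap_apply_of_ne_of_ne, hxy.symm, hyz] using (hrel (Equiv.swap x z) y x z).trans h₂
  have h₅ : c z x y = c x y z := by
    simpa [Equiv.swap_apply_of_ne_of_ne, hxy.symm, hyz] using (hrel (Equiv.swap x z) x z y).trans h₁
  show c x y z * 6 = _
  omega

end Orderings

section Refinement
variable {V B : Type} [Fintype V]

noncomputable def rankEquiv {K : Type} [LinearOrder K] (g : V → K) (hg : Injective g) :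
    V ≃ Fin (Fintype.card V) :=
  letI := LinearOrder.lift' g hg
  (Fintype.orderIsoFinOfCardEq V rfl).symm.toEquiv

lemma rankEquiv_lt_rankEquiv_iff {K : Type} [LinearOrder K] {g : V → K} (hg : Injective g)
    {v u : V} : rankEquiv g hg v < rankEquiv g hg u ↔ g v < g u :=
  letI := LinearOrder.lift' g hg
  (Fintype.orderIsoFinOfCardEq V rfl).symm.lt_iff_lt

variable [LinearOrder B] (φt : V → B)

noncomputable def bucketRefinement (τ : V ≃ Fin (Fintype.card V)) :
    V ≃ Fin (Fintype.card V) :=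
  rankEquiv (fun v => toLex (φt v, τ v)) fun _ _ h => τ.injective (congrArg (ofLex · |>.2) h)

lemma bucketRefinement_lt_iff (τ : V ≃ Fin (Fintype.card V)) {v u : V} :
    bucketRefinement φt τ v < bucketRefinement φt τ u ↔
      φt v < φt u ∨ φt v = φt u ∧ τ v < τ u :=
  (rankEquiv_lt_rankEquiv_iff _).trans Prod.Lex.toLex_lt_toLex

lemma le_of_bucketRefinement_lt {τ : V ≃ Fin (Fintype.card V)} {v u : V}
    (h : bucketRefinement φt τ v < bucketRefinement φt τ u) : φt v ≤ φt u :=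
  ((bucketRefinement_lt_iff φt τ).1 h).elim le_of_lt fun h => h.1.le

end Refinement

lemma prod_factorial_eq_of_le_one {B : Type} [Fintype B] {g : B → ℕ} (b₀ : B)
    (h : ∀ b ≠ b₀, g b ≤ 1) : ∏ b, ((g b).factorial : ℚ) = (g b₀).factorial :=
  Fintype.prod_eq_single b₀ fun b hb => by simp [Nat.factorial_eq_one.2 (h b hb)]

section Payoff
variable {V B : Type} [Fintype B] [LinearOrder B] (φt : V → B) {x y z : V}

lemma bucketPayoff2_of_lt (h : φt x < φt y) : bucketPayoff2 φt (x, y) = 1 := by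
  rw [bucketPayoff2, if_pos h.le, prod_factorial_eq_of_le_one (φt x)]
  · simp [h.ne']
  · intro b hb
    split_ifs <;> simp_all

lemma bucketPayoff2_of_eq (h : φt x = φt y) : bucketPayoff2 φt (x, y) = 2⁻¹ := by
  rw [bucketPayoff2, if_pos h.le, prod_factorial_eq_of_le_one (φt x)]
  · simp [h]
  · intro b hb
    split_ifs <;> simp_all

lemma bucketPayoff3_of_lt_of_lt (h₁ : φt x < φt y) (h₂ : φt y < φt z) :
    bucketPayoff3 φt (x, y, z) = 1 := by
  rw [bucketPayoff3, if_pos ⟨h₁.le, h₂.le⟩, prod_factorial_eq_of_le_one (φt x)]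
  · simp [h₁.ne', (h₁.trans h₂).ne']
  · intro b hb
    split_ifs <;> simp_all

lemma bucketPayoff3_of_lt_of_eq (h₁ : φt x < φt y) (h₂ : φt y = φt z) :
    bucketPayoff3 φt (x, y, z) = 2⁻¹ := by
  rw [bucketPayoff3, if_pos ⟨h₁.le, h₂.le⟩, prod_factorial_eq_of_le_one (φt y)]
  · simp [(h₂ ▸ h₁).ne, h₂]
  · intro b hb
    split_ifs <;> simp_all

lemma bucketPayoff3_of_eq_of_lt (h₁ : φt x = φt y) (h₂ : φt y < φt z) :
    bucketPayoff3 φt (x, y, z) = 2⁻¹ := by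
  rw [bucketPayoff3, if_pos ⟨h₁.le, h₂.le⟩, prod_factorial_eq_of_le_one (φt x)]
  · simp [h₁, h₂.ne']
  · intro b hb
    split_ifs <;> simp_all

lemma bucketPayoff3_of_eq_of_eq (h₁ : φt x = φt y) (h₂ : φt y = φt z) :
    bucketPayoff3 φt (x, y, z) = 6⁻¹ := by
  rw [bucketPayoff3, if_pos ⟨h₁.le, h₂.le⟩, prod_factorial_eq_of_le_one (φt x)]
  · simp [h₁, h₂, Nat.factorial]
  · intro b hb
    split_ifs <;> simp_all

end Payoff

section Averaging
variable {V B : Type} [Fintype V] {x y z : V}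

local notation "N" => (Fintype.card (V ≃ Fin (Fintype.card V)) : ℚ)

lemma card_orderings_lt (hxy : x ≠ y) :
    (#{τ : V ≃ Fin (Fintype.card V) | τ x < τ y} : ℚ) = N / 2 := by
  rw [eq_div_iff two_ne_zero]
  norm_cast
  -- `convert` identifies the `<` of `Fin` with the one of its `LinearOrder` instance.
  convert card_filter_lt_mul_two hxy

lemma card_orderings_sorted (hxy : x ≠ y) (hxz : x ≠ z) (hyz : y ≠ z) :
    (#{τ : V ≃ Fin (Fintype.card V) | τ x < τ y ∧ τ y < τ z} : ℚ) = N / 6 := by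
  rw [eq_div_iff (by norm_num)]
  norm_cast
  convert card_filter_sorted_mul_six hxy hxz hyz

variable [Fintype B] [LinearOrder B] (φt : V → B)

lemma card_bucketRefinement_lt (hxy : x ≠ y) :
    (#{τ | bucketRefinement φt τ x < bucketRefinement φt τ y} : ℚ) =
      N * bucketPayoff2 φt (x, y) := by
  rcases lt_trichotomy (φt x) (φt y) with h | h | h
  · simp [bucketRefinement_lt_iff, h, bucketPayoff2_of_lt]
  · rw [filter_congr (q := fun τ : V ≃ Fin _ => τ x < τ y) fun τ _ => by
        simp [bucketRefinement_lt_iff, h],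
      bucketPayoff2_of_eq φt h, card_orderings_lt hxy, div_eq_mul_inv]
  · simp [bucketRefinement_lt_iff, h.not_gt, h.ne', bucketPayoff2, h.not_ge]

lemma card_bucketRefinement_sorted (hxy : x ≠ y) (hxz : x ≠ z) (hyz : y ≠ z) :
    (#{τ | bucketRefinement φt τ x < bucketRefinement φt τ y ∧
        bucketRefinement φt τ y < bucketRefinement φt τ z} : ℚ) =
      N * bucketPayoff3 φt (x, y, z) := by
  by_cases hle : φt x ≤ φt y ∧ φt y ≤ φt z
  swap
  · rw [bucketPayoff3, if_neg hle, mul_zero, Nat.cast_eq_zero, card_eq_zero,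
      filter_eq_empty_iff]
    exact fun τ _ h => hle ⟨le_of_bucketRefinement_lt φt h.1, le_of_bucketRefinement_lt φt h.2⟩
  obtain ⟨h₁ | h₁, h₂ | h₂⟩ := And.imp lt_or_eq_of_le lt_or_eq_of_le hle
  · simp [bucketRefinement_lt_iff, h₁, h₂, bucketPayoff3_of_lt_of_lt]
  · rw [filter_congr (q := fun τ : V ≃ Fin _ => τ y < τ z) fun τ _ => by
        simp [bucketRefinement_lt_iff, h₂, h₂ ▸ h₁],
      bucketPayoff3_of_lt_of_eq φt h₁ h₂, card_orderings_lt hyz, div_eq_mul_inv]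
  · rw [filter_congr (q := fun τ : V ≃ Fin _ => τ x < τ y) fun τ _ => by
        simp [bucketRefinement_lt_iff, h₁, h₂],
      bucketPayoff3_of_eq_of_lt φt h₁ h₂, card_orderings_lt hxy, div_eq_mul_inv]
  · rw [filter_congr (q := fun τ : V ≃ Fin _ => τ x < τ y ∧ τ y < τ z) fun τ _ => by
        simp [bucketRefinement_lt_iff, h₁, h₂],
      bucketPayoff3_of_eq_of_eq φt h₁ h₂, card_orderings_sorted hxy hxz hyz, div_eq_mul_inv]

end Averaging

section Main
variable {V B : Type} [Fintype V] [Fintype B] [LinearOrder B]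

noncomputable def bucketWeight (C₂ : Finset (V × V)) (C₃ : Finset (V × V × V))
    (w₂ : V × V → ℕ) (w₃ : V × V × V → ℕ) (φt : V → B) : ℚ :=
  (∑ e ∈ C₂, (w₂ e : ℚ) * bucketPayoff2 φt e) + ∑ e ∈ C₃, (w₃ e : ℚ) * bucketPayoff3 φt e

variable {C₂ : Finset (V × V)} {C₃ : Finset (V × V × V)} (w₂ : V × V → ℕ) (w₃ : V × V × V → ℕ)
  (φt : V → B)

lemma sum_ordWeight_bucketRefinement (hd₂ : ∀ e ∈ C₂, e.1 ≠ e.2)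
    (hd₃ : ∀ e ∈ C₃, e.1 ≠ e.2.1 ∧ e.1 ≠ e.2.2 ∧ e.2.1 ≠ e.2.2) :
    ∑ τ, ordWeight C₂ C₃ w₂ w₃ (bucketRefinement φt τ) =
      Fintype.card (V ≃ Fin (Fintype.card V)) * bucketWeight C₂ C₃ w₂ w₃ φt := by
  simp only [ordWeight, bucketWeight, sum_add_distrib, sum_filter, mul_add, mul_sum]
  congr 1 <;> rw [sum_comm]
  · refine sum_congr rfl fun e he => ?_
    rw [← sum_filter, sum_const, nsmul_eq_mul, card_bucketRefinement_lt φt (hd₂ e he)]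
    ring
  · refine sum_congr rfl fun e he => ?_
    obtain ⟨h₁, h₂, h₃⟩ := hd₃ e he
    rw [← sum_filter, sum_const, nsmul_eq_mul, card_bucketRefinement_sorted φt h₁ h₂ h₃]
    ring

lemma exists_bucketWeight_le_ordWeight (hd₂ : ∀ e ∈ C₂, e.1 ≠ e.2)
    (hd₃ : ∀ e ∈ C₃, e.1 ≠ e.2.1 ∧ e.1 ≠ e.2.2 ∧ e.2.1 ≠ e.2.2) :
    ∃ φ : V ≃ Fin (Fintype.card V), bucketWeight C₂ C₃ w₂ w₃ φt ≤ ordWeight C₂ C₃ w₂ w₃ φ := by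
  have hsum : ∑ _τ : V ≃ Fin (Fintype.card V), bucketWeight C₂ C₃ w₂ w₃ φt ≤
      ∑ τ, ordWeight C₂ C₃ w₂ w₃ (bucketRefinement φt τ) := by
    rw [sum_ordWeight_bucketRefinement w₂ w₃ φt hd₂ hd₃, sum_const, card_univ, nsmul_eq_mul]
  obtain ⟨τ, -, hτ⟩ := exists_le_of_sum_le ⟨Fintype.equivFin V, mem_univ _⟩ hsum
  exact ⟨_, hτ⟩

end Main

theorem stmt_17_general {V B : Type} [Fintype V] [Fintype B] [LinearOrder B]
    (C₂ : Finset (V × V)) (C₃ : Finset (V × V × V))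
    (w₂ : V × V → ℕ) (w₃ : V × V × V → ℕ)
    (hd₂ : ∀ e ∈ C₂, e.1 ≠ e.2)
    (hd₃ : ∀ e ∈ C₃, e.1 ≠ e.2.1 ∧ e.1 ≠ e.2.2 ∧ e.2.1 ≠ e.2.2)
    (φt : V → B) :
    (∃ φ : V ≃ Fin (Fintype.card V),
      (∑ e ∈ C₂, (w₂ e : ℚ) * bucketPayoff2 φt e) +
          (∑ e ∈ C₃, (w₃ e : ℚ) * bucketPayoff3 φt e) ≤
        ordWeight C₂ C₃ w₂ w₃ φ) ∧
    (∀ k : ℚ,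
      (∑ e ∈ C₂, (w₂ e : ℚ)) / 2 + (∑ e ∈ C₃, (w₃ e : ℚ)) / 6 + k ≤
          (∑ e ∈ C₂, (w₂ e : ℚ) * bucketPayoff2 φt e) +
            (∑ e ∈ C₃, (w₃ e : ℚ) * bucketPayoff3 φt e) →
        ∃ φ : V ≃ Fin (Fintype.card V),
          (∑ e ∈ C₂, (w₂ e : ℚ)) / 2 + (∑ e ∈ C₃, (w₃ e : ℚ)) / 6 + k ≤
            ordWeight C₂ C₃ w₂ w₃ φ) := by
  have hbest := exists_bucketWeight_le_ordWeight w₂ w₃ φt hd₂ hd₃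
  exact ⟨hbest, fun k hk => hbest.imp fun φ hφ => hk.trans hφ⟩

/-- For every bucket map `φt : V → B` into a finite linear order there is
a linear ordering `φ` of `V` whose weight is at least the bucket weight `w_t(φt, C)`; in
particular, if some bucket map has bucket weight at least `ρ·W + k` then some linear
ordering has weight at least `ρ·W + k`. -/
theorem stmt_17 {V B : Type} [Fintype V] [DecidableEq V] [Fintype B] [LinearOrder B]
    (C₂ : Finset (V × V)) (C₃ : Finset (V × V × V))
    (w₂ : V × V → ℕ) (w₃ : V × V × V → ℕ)
    (hw₂ : ∀ e ∈ C₂, 0 < w₂ e) (hw₃ : ∀ e ∈ C₃, 0 < w₃ e)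
    (hd₂ : ∀ e ∈ C₂, e.1 ≠ e.2)
    (hd₃ : ∀ e ∈ C₃, e.1 ≠ e.2.1 ∧ e.1 ≠ e.2.2 ∧ e.2.1 ≠ e.2.2)
    (φt : V → B) :
    (∃ φ : V ≃ Fin (Fintype.card V),
      (∑ e ∈ C₂, (w₂ e : ℚ) * bucketPayoff2 φt e) +
          (∑ e ∈ C₃, (w₃ e : ℚ) * bucketPayoff3 φt e) ≤
        ordWeight C₂ C₃ w₂ w₃ φ) ∧
    (∀ k : ℚ,
      (∑ e ∈ C₂, (w₂ e : ℚ)) / 2 + (∑ e ∈ C₃, (w₃ e : ℚ)) / 6 + k ≤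
          (∑ e ∈ C₂, (w₂ e : ℚ) * bucketPayoff2 φt e) +
            (∑ e ∈ C₃, (w₃ e : ℚ) * bucketPayoff3 φt e) →
        ∃ φ : V ≃ Fin (Fintype.card V),
          (∑ e ∈ C₂, (w₂ e : ℚ)) / 2 + (∑ e ∈ C₃, (w₃ e : ℚ)) / 6 + k ≤
            ordWeight C₂ C₃ w₂ w₃ φ) :=
  stmt_17_general C₂ C₃ w₂ w₃ hd₂ hd₃ φt
end
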